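/- arXiv:1805.07701 — 5 statements merged into one kernel-verified Lean document; each statement's English description precedes it below -/
import Mathlib

section
/- For all real numbers x > 0 and y > 0, B(x + 1/2, y) < √(x/(x+y)) · B(x, y); equivalently, Γ(x + 1/2)·Γ(y)/Γ(x + y + 1/2) < √(x/(x+y)) · Γ(x)·Γ(y)/Γ(x + y). -/
open MeasureTheory Set intervalIntegral

noncomputable def betaFn (p q : ℝ) : ℝ → ℝ := fun t => t ^ (p - 1) * (1 - t) ^ (q - 1)

lemma betaFn_intable {p q : ℝ} (hp : 0 < p) (hq : 0 < q) :
    IntervalIntegrable (betaFn p q) volume 0 1 := by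
  have hc : IntervalIntegrable (fun t : ℝ => (t : ℂ) ^ ((p : ℂ) - 1) * ((1 : ℂ) - t) ^ ((q : ℂ) - 1))
      volume 0 1 := Complex.betaIntegral_convergent (by simpa using hp) (by simpa using hq)
  rw [intervalIntegrable_iff_integrableOn_Ioc_of_le (by norm_num)] at hc ⊢
  have h2 : IntegrableOn (fun t : ℝ => (((t:ℝ) : ℂ) ^ ((p : ℂ) - 1) * ((1 : ℂ) - t) ^ ((q : ℂ) - 1)).re) (Ioc 0 1) volume := hc.re
  refine MeasureTheory.IntegrableOn.congr_fun h2 ?_ measurableSet_Ioc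
  intro t ht
  simp only [betaFn]
  have e1 : (0:ℝ) ≤ t := ht.1.le
  have e2 : (0:ℝ) ≤ 1 - t := by simp only [mem_Ioc] at ht; linarith [ht.2]
  rw [show ((1:ℂ) - (t:ℝ)) = ((1 - t : ℝ) : ℂ) by push_cast; ring,
    show ((p:ℂ) - 1) = ((p - 1 : ℝ) : ℂ) by push_cast; ring,
    show ((q:ℂ) - 1) = ((q - 1 : ℝ) : ℂ) by push_cast; ring,
    ← Complex.ofReal_cpow e1, ← Complex.ofReal_cpow e2]
  simp

lemma betaFn_eq_Gamma {p q : ℝ} (hp : 0 < p) (hq : 0 < q) :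
    ∫ t in (0:ℝ)..1, betaFn p q t = Real.Gamma p * Real.Gamma q / Real.Gamma (p + q) := by
  have key := Complex.Gamma_mul_Gamma_eq_betaIntegral (s := p) (t := q) (by simpa using hp) (by simpa using hq)
  have hb : Complex.betaIntegral p q = ((∫ t in (0:ℝ)..1, betaFn p q t : ℝ) : ℂ) := by
    rw [Complex.betaIntegral, ← intervalIntegral.integral_ofReal]
    refine intervalIntegral.integral_congr ?_
    intro t ht
    rw [uIcc_of_le (by norm_num)] at ht
    simp only [betaFn]
    rw [show ((1:ℂ) - (t:ℝ)) = ((1 - t : ℝ) : ℂ) by push_cast; ring,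
      show ((p:ℂ) - 1) = ((p - 1 : ℝ) : ℂ) by push_cast; ring,
      show ((q:ℂ) - 1) = ((q - 1 : ℝ) : ℂ) by push_cast; ring,
      ← Complex.ofReal_cpow ht.1, ← Complex.ofReal_cpow (by linarith [ht.2] : (0:ℝ) ≤ 1 - t)]
    simp
  rw [hb] at key
  have hG : (0:ℝ) < Real.Gamma (p + q) := Real.Gamma_pos_of_pos (by linarith)
  have := key
  rw [show ((p:ℂ) + q) = ((p + q : ℝ) : ℂ) by push_cast; ring] at this
  rw [Complex.Gamma_ofReal, Complex.Gamma_ofReal, Complex.Gamma_ofReal] at this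
  have h2 : ((Real.Gamma p * Real.Gamma q : ℝ) : ℂ) = ((Real.Gamma (p + q) * ∫ t in (0:ℝ)..1, betaFn p q t : ℝ) : ℂ) := by
    push_cast; exact this
  have h3 := Complex.ofReal_injective h2
  field_simp
  linarith [h3]



lemma cs_aux {a b : ℝ} (hab : a < b) {u v w : ℝ → ℝ}
    (hu : IntervalIntegrable u volume a b) (hv : IntervalIntegrable v volume a b)
    (hw : IntervalIntegrable w volume a b)
    (huv : ∀ t ∈ Ioo a b, w t ^ 2 = u t * v t)
    (hup : ∀ t ∈ Ioo a b, 0 < u t) (hvp : ∀ t ∈ Ioo a b, 0 < v t)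
    (hwp : ∀ t ∈ Ioo a b, 0 ≤ w t) :
    (∫ t in a..b, w t) ^ 2 ≤ (∫ t in a..b, u t) * (∫ t in a..b, v t) := by
  set F := ∫ t in a..b, u t with hF
  set G := ∫ t in a..b, v t with hG
  have hFpos : 0 < F := intervalIntegral_pos_of_pos_on hu hup hab
  have hGpos : 0 < G := intervalIntegral_pos_of_pos_on hv hvp hab
  set l := Real.sqrt (G / F) with hl
  have hlpos : 0 < l := Real.sqrt_pos.mpr (by positivity)
  have hlsq : l ^ 2 = G / F := Real.sq_sqrt (by positivity)
  have hres : volume.restrict (Icc a b) = volume.restrict (Ioo a b) :=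
    (Measure.restrict_congr_set Ioo_ae_eq_Icc).symm
  -- pointwise AM-GM bound
  have hcomb : IntervalIntegrable (fun t => (l * u t + v t / l) / 2) volume a b :=
    (((hu.const_mul l).add (hv.div_const l)).div_const 2)
  have hmono : (∫ t in a..b, w t) ≤ ∫ t in a..b, (l * u t + v t / l) / 2 := by
    refine integral_mono_ae_restrict hab.le hw hcomb ?_
    rw [hres, Filter.EventuallyLE, ae_restrict_iff' measurableSet_Ioo]
    filter_upwards with t ht
    have h1 := hup t ht; have h2 := hvp t ht; have h3 := hwp t ht; have h4 := huv t ht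
    have e : (l * u t + v t / l) / 2 = (l ^ 2 * u t + v t) / (2 * l) := by
      field_simp
    rw [e, le_div_iff₀ (by positivity)]
    nlinarith [sq_nonneg (l ^ 2 * u t - v t), mul_pos h1 h2, h4,
      mul_pos (mul_pos hlpos hlpos) h1, mul_nonneg (mul_nonneg hlpos.le h3) hlpos.le,
      mul_nonneg h3 h2.le, mul_nonneg (mul_nonneg hlpos.le hlpos.le) (mul_nonneg h3 h1.le)]
  have hwnn : 0 ≤ ∫ t in a..b, w t := by
    rw [← intervalIntegral.integral_zero (a := a) (b := b) (μ := volume)]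
    refine integral_mono_ae_restrict hab.le intervalIntegrable_const hw ?_
    rw [hres, Filter.EventuallyLE, ae_restrict_iff' measurableSet_Ioo]
    filter_upwards with t ht using by simpa using hwp t ht
  have hval : (∫ t in a..b, (l * u t + v t / l) / 2) = (l * F + G / l) / 2 := by
    rw [intervalIntegral.integral_div, intervalIntegral.integral_add (hu.const_mul l) (hv.div_const l),
      intervalIntegral.integral_const_mul, intervalIntegral.integral_div]
  have hkey : ((l * F + G / l) / 2) ^ 2 = F * G := by
    have hl2 : l ^ 2 = G / F := hlsq
    rw [eq_div_iff hFpos.ne'] at hl2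
    have h4 : (l ^ 2 * F + G) ^ 2 = 4 * l ^ 2 * (F * G) := by
      linear_combination (l ^ 2 * F - G) * hl2
    field_simp
    linear_combination h4
  nlinarith [hmono, hwnn, hval, hkey, sq_nonneg ((l * F + G / l) / 2)]


section betaAux

lemma betaFn_pos {p q : ℝ} {t : ℝ} (ht : t ∈ Ioo (0:ℝ) 1) :
    0 < t ^ (p - 1) * (1 - t) ^ (q - 1) :=
  mul_pos (Real.rpow_pos_of_pos ht.1 _) (Real.rpow_pos_of_pos (by linarith [ht.2]) _)

end betaAux

set_option maxHeartbeats 1000000 in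
private lemma beta_strict_cs (x y : ℝ) (hx : 0 < x) (hy : 0 < y)
    (u v w : ℝ → ℝ)
    (hu01 : IntervalIntegrable u volume 0 1)
    (hv01 : IntervalIntegrable v volume 0 1)
    (hw01 : IntervalIntegrable w volume 0 1)
    (hud : u = fun t => t ^ (x - 1) * (1 - t) ^ (y - 1))
    (hvd : v = fun t => t ^ (x + 1 - 1) * (1 - t) ^ (y - 1))
    (hwd : w = fun t => t ^ (x + 1/2 - 1) * (1 - t) ^ (y - 1))
    (cs_aux : ∀ {a b : ℝ}, a < b → ∀ {u v w : ℝ → ℝ},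
      IntervalIntegrable u volume a b → IntervalIntegrable v volume a b →
      IntervalIntegrable w volume a b →
      (∀ t ∈ Ioo a b, w t ^ 2 = u t * v t) →
      (∀ t ∈ Ioo a b, 0 < u t) → (∀ t ∈ Ioo a b, 0 < v t) →
      (∀ t ∈ Ioo a b, 0 ≤ w t) →
      (∫ t in a..b, w t) ^ 2 ≤ (∫ t in a..b, u t) * (∫ t in a..b, v t)) :
    (∫ t in (0:ℝ)..1, w t) ^ 2 < (∫ t in (0:ℝ)..1, u t) * (∫ t in (0:ℝ)..1, v t) := by
  -- restrictions to halves
  have hsubA : uIcc (0:ℝ) (1/2) ⊆ uIcc (0:ℝ) 1 := by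
    rw [uIcc_of_le (by norm_num), uIcc_of_le (by norm_num)]
    exact Icc_subset_Icc (le_refl _) (by norm_num)
  have hsubB : uIcc (1/2:ℝ) 1 ⊆ uIcc (0:ℝ) 1 := by
    rw [uIcc_of_le (by norm_num), uIcc_of_le (by norm_num)]
    exact Icc_subset_Icc (by norm_num) (le_refl _)
  have huA := hu01.mono_set hsubA; have huB := hu01.mono_set hsubB
  have hvA := hv01.mono_set hsubA; have hvB := hv01.mono_set hsubB
  have hwA := hw01.mono_set hsubA; have hwB := hw01.mono_set hsubB
  -- positivity pointwise
  have hup : ∀ t ∈ Ioo (0:ℝ) 1, 0 < u t := fun t ht => hud ▸ betaFn_pos ht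
  have hvp : ∀ t ∈ Ioo (0:ℝ) 1, 0 < v t := fun t ht => hvd ▸ betaFn_pos ht
  have hwp : ∀ t ∈ Ioo (0:ℝ) 1, 0 < w t := fun t ht => hwd ▸ betaFn_pos ht
  have hIooA : Ioo (0:ℝ) (1/2) ⊆ Ioo (0:ℝ) 1 := Ioo_subset_Ioo (le_refl _) (by norm_num)
  have hIooB : Ioo (1/2:ℝ) 1 ⊆ Ioo (0:ℝ) 1 := Ioo_subset_Ioo (by norm_num) (le_refl _)
  -- the key multiplicative identity
  have huv : ∀ t ∈ Ioo (0:ℝ) 1, w t ^ 2 = u t * v t := by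
    intro t ht
    rw [hud, hvd, hwd]
    simp only
    have h1t : (0:ℝ) < 1 - t := by linarith [ht.2]
    rw [show (t ^ (x + 1/2 - 1) * (1 - t) ^ (y - 1)) ^ 2
        = (t ^ (x + 1/2 - 1) * t ^ (x + 1/2 - 1)) * ((1 - t) ^ (y - 1) * (1 - t) ^ (y - 1)) by ring,
      ← Real.rpow_add ht.1, ← Real.rpow_add h1t]
    rw [show (t ^ (x - 1) * (1 - t) ^ (y - 1)) * (t ^ (x + 1 - 1) * (1 - t) ^ (y - 1))
        = (t ^ (x - 1) * t ^ (x + 1 - 1)) * ((1 - t) ^ (y - 1) * (1 - t) ^ (y - 1)) by ring,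
      ← Real.rpow_add ht.1, ← Real.rpow_add h1t,
      show x + 1/2 - 1 + (x + 1/2 - 1) = x - 1 + (x + 1 - 1) by ring]
  -- v t = t * u t
  have hvu : ∀ t ∈ Ioo (0:ℝ) 1, v t = t * u t := by
    intro t ht
    rw [hud, hvd]
    simp only
    rw [show x + 1 - 1 = (x - 1) + 1 by ring, Real.rpow_add_one ht.1.ne']
    ring
  -- C-S on each half
  have csA := cs_aux (by norm_num : (0:ℝ) < 1/2) huA hvA hwA
    (fun t ht => huv t (hIooA ht)) (fun t ht => hup t (hIooA ht))
    (fun t ht => hvp t (hIooA ht)) (fun t ht => (hwp t (hIooA ht)).le)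
  have csB := cs_aux (by norm_num : (1/2:ℝ) < 1) huB hvB hwB
    (fun t ht => huv t (hIooB ht)) (fun t ht => hup t (hIooB ht))
    (fun t ht => hvp t (hIooB ht)) (fun t ht => (hwp t (hIooB ht)).le)
  set FA := ∫ t in (0:ℝ)..(1/2), u t
  set FB := ∫ t in (1/2:ℝ)..1, u t
  set GA := ∫ t in (0:ℝ)..(1/2), v t
  set GB := ∫ t in (1/2:ℝ)..1, v t
  set PA := ∫ t in (0:ℝ)..(1/2), w t
  set PB := ∫ t in (1/2:ℝ)..1, w t
  have hFA : 0 < FA := intervalIntegral_pos_of_pos_on huA (fun t ht => hup t (hIooA ht)) (by norm_num)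
  have hFB : 0 < FB := intervalIntegral_pos_of_pos_on huB (fun t ht => hup t (hIooB ht)) (by norm_num)
  have hGA : 0 < GA := intervalIntegral_pos_of_pos_on hvA (fun t ht => hvp t (hIooA ht)) (by norm_num)
  have hGB : 0 < GB := intervalIntegral_pos_of_pos_on hvB (fun t ht => hvp t (hIooB ht)) (by norm_num)
  have hPA : 0 < PA := intervalIntegral_pos_of_pos_on hwA (fun t ht => hwp t (hIooA ht)) (by norm_num)
  have hPB : 0 < PB := intervalIntegral_pos_of_pos_on hwB (fun t ht => hwp t (hIooB ht)) (by norm_num)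
  -- strict imbalance : GA < FA/2 and GB > FB/2
  have himbA : GA < (1/2) * FA := by
    have hpos : 0 < ∫ t in (0:ℝ)..(1/2), ((1/2) * u t - v t) := by
      refine intervalIntegral_pos_of_pos_on ((huA.const_mul (1/2)).sub hvA) ?_ (by norm_num)
      intro t ht
      rw [hvu t (hIooA ht)]
      have := hup t (hIooA ht)
      nlinarith [ht.1, ht.2]
    rwa [intervalIntegral.integral_sub (huA.const_mul (1/2)) hvA,
      intervalIntegral.integral_const_mul, sub_pos] at hpos
  have himbB : (1/2) * FB < GB := by
    have hpos : 0 < ∫ t in (1/2:ℝ)..1, (v t - (1/2) * u t) := by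
      refine intervalIntegral_pos_of_pos_on (hvB.sub (huB.const_mul (1/2))) ?_ (by norm_num)
      intro t ht
      rw [hvu t (hIooB ht)]
      have := hup t (hIooB ht)
      nlinarith [ht.1, ht.2]
    rwa [intervalIntegral.integral_sub hvB (huB.const_mul (1/2)),
      intervalIntegral.integral_const_mul, sub_pos] at hpos
  -- totals
  have hFtot : (∫ t in (0:ℝ)..1, u t) = FA + FB :=
    (intervalIntegral.integral_add_adjacent_intervals huA huB).symm
  have hGtot : (∫ t in (0:ℝ)..1, v t) = GA + GB :=
    (intervalIntegral.integral_add_adjacent_intervals hvA hvB).symm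
  have hPtot : (∫ t in (0:ℝ)..1, w t) = PA + PB :=
    (intervalIntegral.integral_add_adjacent_intervals hwA hwB).symm
  rw [hFtot, hGtot, hPtot]
  clear_value FA FB GA GB PA PB
  clear hFtot hGtot hPtot huA huB hvA hvB hwA hwB hup hvp hwp huv hvu hud hvd hwd hu01 hv01 hw01 cs_aux hsubA hsubB hIooA hIooB u v w
  -- now pure algebra with square roots
  set sA := Real.sqrt (FA * GA) with hsA
  set sB := Real.sqrt (FB * GB) with hsB
  have hsA2 : sA ^ 2 = FA * GA := Real.sq_sqrt (mul_pos hFA hGA).le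
  have hsB2 : sB ^ 2 = FB * GB := Real.sq_sqrt (mul_pos hFB hGB).le
  have hsApos : 0 < sA := Real.sqrt_pos.mpr (mul_pos hFA hGA)
  have hsBpos : 0 < sB := Real.sqrt_pos.mpr (mul_pos hFB hGB)
  have hPA' : PA ≤ sA := by
    nlinarith [csA, hsA2, hPA, hsApos]
  have hPB' : PB ≤ sB := by
    nlinarith [csB, hsB2, hPB, hsBpos]
  -- strict AM-GM : 2 sA sB < FA*GB + FB*GA
  have hkey : 2 * (sA * sB) < FA * GB + FB * GA := by
    set p := Real.sqrt (FA * GB) with hp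
    set r := Real.sqrt (FB * GA) with hr
    have hp2 : p ^ 2 = FA * GB := Real.sq_sqrt (mul_pos hFA hGB).le
    have hr2 : r ^ 2 = FB * GA := Real.sq_sqrt (mul_pos hFB hGA).le
    have hppos : 0 < p := Real.sqrt_pos.mpr (mul_pos hFA hGB)
    have hrpos : 0 < r := Real.sqrt_pos.mpr (mul_pos hFB hGA)
    have hpr : sA * sB = p * r := by
      rw [hsA, hsB, hp, hr, ← Real.sqrt_mul (mul_pos hFA hGA).le, ← Real.sqrt_mul (mul_pos hFA hGB).le,
        show FA * GA * (FB * GB) = FA * GB * (FB * GA) by ring]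
    have hne : p ≠ r := by
      intro h
      rw [h] at hp2
      nlinarith [hp2, hr2, mul_lt_mul_of_pos_left himbB hFA, mul_lt_mul_of_pos_left himbA hFB]
    rw [hpr]
    have h5 : 0 < (p - r) ^ 2 := by
      have h6 := sub_ne_zero.mpr hne
      positivity
    nlinarith [h5, hp2, hr2]
  nlinarith [hsA2, hsB2, hkey, mul_le_mul hPA' hPB' hPB.le hsApos.le, hPA, hPB, hPA', hPB']

/-- **Beta function inequality.** For all `x > 0` and `y > 0`,
`B(x + 1/2, y) < √(x/(x+y)) · B(x, y)`, where
`B(x, y) = Γ(x)Γ(y)/Γ(x+y)` is the Beta function. -/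
theorem beta_half_shift_lt (x y : ℝ) (hx : 0 < x) (hy : 0 < y) :
    Real.Gamma (x + 1 / 2) * Real.Gamma y / Real.Gamma (x + y + 1 / 2)
      < Real.sqrt (x / (x + y)) *
        (Real.Gamma x * Real.Gamma y / Real.Gamma (x + y)) := by
  have hx2 : 0 < x + 1/2 := by linarith
  have hx1 : 0 < x + 1 := by linarith
  have key := beta_strict_cs x y hx hy (betaFn x y) (betaFn (x+1) y) (betaFn (x+1/2) y)
    (betaFn_intable hx hy) (betaFn_intable hx1 hy) (betaFn_intable hx2 hy)
    rfl rfl rfl cs_aux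
  rw [betaFn_eq_Gamma hx hy, betaFn_eq_Gamma hx1 hy, betaFn_eq_Gamma hx2 hy] at key
  have hGxy : 0 < Real.Gamma (x + y) := Real.Gamma_pos_of_pos (by linarith)
  have hGx : 0 < Real.Gamma x := Real.Gamma_pos_of_pos hx
  have hGy : 0 < Real.Gamma y := Real.Gamma_pos_of_pos hy
  have hGp : 0 < Real.Gamma (x + 1/2) := Real.Gamma_pos_of_pos hx2
  have hGpy : 0 < Real.Gamma (x + 1/2 + y) := Real.Gamma_pos_of_pos (by linarith)
  -- rewrite the x+1 Beta value using the Gamma recurrence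
  have h1 : Real.Gamma (x + 1) = x * Real.Gamma x := Real.Gamma_add_one hx.ne'
  have h2 : Real.Gamma (x + 1 + y) = (x + y) * Real.Gamma (x + y) := by
    rw [show x + 1 + y = (x + y) + 1 by ring, Real.Gamma_add_one (by positivity)]
  rw [h1, h2] at key
  set B0 := Real.Gamma x * Real.Gamma y / Real.Gamma (x + y) with hB0
  set Bp := Real.Gamma (x + 1/2) * Real.Gamma y / Real.Gamma (x + 1/2 + y) with hBp
  have hB0pos : 0 < B0 := by rw [hB0]; positivity
  have hBppos : 0 < Bp := by rw [hBp]; positivity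
  have hxy : 0 < x + y := by linarith
  have key2 : Bp ^ 2 < (x / (x + y)) * B0 ^ 2 := by
    have h3 : x * Real.Gamma x * Real.Gamma y / ((x + y) * Real.Gamma (x + y))
        = (x / (x + y)) * B0 := by
      rw [hB0]; field_simp
    rw [h3] at key
    calc Bp ^ 2 < B0 * ((x / (x + y)) * B0) := key
    _ = (x / (x + y)) * B0 ^ 2 := by ring
  have hLHS : Real.Gamma (x + 1/2) * Real.Gamma y / Real.Gamma (x + y + 1/2) = Bp := by
    rw [hBp, show x + y + 1/2 = x + 1/2 + y by ring]
  rw [hLHS]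
  have hsq : Real.sqrt (x / (x + y)) * B0 = Real.sqrt ((x / (x + y)) * B0 ^ 2) := by
    rw [Real.sqrt_mul (by positivity), Real.sqrt_sq hB0pos.le]
  rw [hsq]
  exact (Real.lt_sqrt hBppos.le).mpr key2
end

section
/- For natural numbers n ≥ k ≥ 1, one has n · c_n² · c_{k-1}² ≤ k · c_k² · c_{n-1}², with equality if and only if n = k. -/
/-- `sphereVolume j` is the volume `c_j` of the unit sphere `S^j ⊆ ℝ^{j+1}`,
given explicitly by `c_j = 2 π^{(j+1)/2} / Γ((j+1)/2)`. -/
noncomputable def sphereVolume (j : ℕ) : ℝ :=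
  2 * Real.pi ^ (((j : ℝ) + 1) / 2) / Real.Gamma (((j : ℝ) + 1) / 2)

/-!
Write `W m = ∫₀^π sin^m`. The recursions `Γ(s + 1) = s Γ(s)` and `W (m + 2) = (m + 1)/(m + 2) W m`
give `c_{m+1} = W m · c_m`, so the inequality says that `m ↦ (m + 1) (W m)²` is strictly
decreasing. By the Wallis recursion this is the strict log-convexity `W (m+1)² < W m · W (m+2)`,
which is Cauchy–Schwarz: `∫₀^π sin^m x (sin x - t)² dx > 0` for `t = W (m+1) / W m`.
-/

open Real intervalIntegral

theorem integral_sin_pow_add_two (n : ℕ) :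
    ∫ x in 0..π, sin x ^ (n + 2) = (n + 1) / (n + 2) * ∫ x in 0..π, sin x ^ n := by
  simpa using integral_sin_pow (a := 0) (b := π) n

theorem integral_sin_pow_mul_sub_sq (n : ℕ) (t : ℝ) :
    ∫ x in 0..π, sin x ^ n * (sin x - t) ^ 2
      = (∫ x in 0..π, sin x ^ (n + 2)) - 2 * t * (∫ x in 0..π, sin x ^ (n + 1))
        + t ^ 2 * ∫ x in 0..π, sin x ^ n := by
  have hint (m : ℕ) : IntervalIntegrable (fun x ↦ sin x ^ m) MeasureTheory.volume 0 π :=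
    (continuous_sin.pow m).intervalIntegrable 0 π
  have hexpand : (fun x ↦ sin x ^ n * (sin x - t) ^ 2)
      = fun x ↦ sin x ^ (n + 2) - 2 * t * sin x ^ (n + 1) + t ^ 2 * sin x ^ n := by
    funext x; ring
  rw [hexpand, integral_add ((hint _).sub ((hint _).const_mul _)) ((hint _).const_mul _),
    integral_sub (hint _) ((hint _).const_mul _), integral_const_mul, integral_const_mul]

theorem integral_sin_pow_succ_sq_lt (n : ℕ) :
    (∫ x in 0..π, sin x ^ (n + 1)) ^ 2
      < (∫ x in 0..π, sin x ^ n) * ∫ x in 0..π, sin x ^ (n + 2) := by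
  set t := (∫ x in 0..π, sin x ^ (n + 1)) / ∫ x in 0..π, sin x ^ n
  have hpos : 0 < ∫ x in 0..π, sin x ^ n * (sin x - t) ^ 2 := by
    obtain ⟨c, hc, hsin, hne⟩ : ∃ c ∈ Set.Icc 0 π, 0 < sin c ∧ sin c ≠ t := by
      by_cases ht : t = 1
      · refine ⟨π / 6, ⟨by positivity, by linarith [pi_pos]⟩, ?_⟩
        rw [sin_pi_div_six, ht]; norm_num
      · exact ⟨π / 2, ⟨by positivity, by linarith [pi_pos]⟩, by simp [Ne.symm ht]⟩
    refine integral_pos pi_pos (by fun_prop) (fun x hx ↦ ?_)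
      ⟨c, hc, by positivity [sub_ne_zero.2 hne]⟩
    have := sin_nonneg_of_nonneg_of_le_pi hx.1.le hx.2
    positivity
  rw [integral_sin_pow_mul_sub_sq] at hpos
  have hW := integral_sin_pow_pos (n := n)
  have ht : t * ∫ x in 0..π, sin x ^ n = ∫ x in 0..π, sin x ^ (n + 1) := div_mul_cancel₀ _ hW.ne'
  nlinarith

theorem strictAnti_mul_sq_integral_sin_pow :
    StrictAnti fun n : ℕ ↦ ((n : ℝ) + 1) * (∫ x in 0..π, sin x ^ n) ^ 2 := by
  refine strictAnti_nat_of_succ_lt fun n ↦ ?_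
  have hlt := integral_sin_pow_succ_sq_lt n
  rw [integral_sin_pow_add_two] at hlt
  have hn : (0 : ℝ) < n + 2 := by positivity
  calc ((n + 1 : ℕ) + 1 : ℝ) * (∫ x in 0..π, sin x ^ (n + 1)) ^ 2
      = (n + 2) * (∫ x in 0..π, sin x ^ (n + 1)) ^ 2 := by push_cast; ring
    _ < (n + 2) * ((∫ x in 0..π, sin x ^ n) * ((n + 1) / (n + 2) * ∫ x in 0..π, sin x ^ n)) :=
      mul_lt_mul_of_pos_left hlt hn
    _ = (n + 1) * (∫ x in 0..π, sin x ^ n) ^ 2 := by field_simp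

theorem Gamma_mul_integral_sin_pow :
    ∀ n : ℕ, Gamma ((n + 2) / 2) * (∫ x in 0..π, sin x ^ n) = √π * Gamma ((n + 1) / 2)
  | 0 => by norm_num [Gamma_one_half_eq, mul_self_sqrt pi_pos.le]
  | 1 => by
    rw [show ((1 : ℕ) + 2 : ℝ) / 2 = 1 / 2 + 1 by norm_num, Gamma_add_one (by norm_num),
      Gamma_one_half_eq]
    norm_num
    ring
  | n + 2 => by
    have h1 : ((n + 2 : ℕ) + 2 : ℝ) / 2 = (n + 2) / 2 + 1 := by push_cast; ring
    have h2 : ((n + 2 : ℕ) + 1 : ℝ) / 2 = (n + 1) / 2 + 1 := by push_cast; ring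
    rw [h1, h2, Gamma_add_one (by positivity), Gamma_add_one (by positivity),
      integral_sin_pow_add_two]
    have hn : (n : ℝ) + 2 ≠ 0 := by positivity
    calc (n + 2) / 2 * Gamma ((n + 2) / 2) * ((n + 1) / (n + 2) * ∫ x in 0..π, sin x ^ n)
        = (n + 1) / 2 * (Gamma ((n + 2) / 2) * ∫ x in 0..π, sin x ^ n) := by field_simp
      _ = √π * ((n + 1) / 2 * Gamma ((n + 1) / 2)) := by
        rw [Gamma_mul_integral_sin_pow n]; ring

theorem sphereVolume_pos (j : ℕ) : 0 < sphereVolume j := by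
  unfold sphereVolume
  positivity

theorem sphereVolume_succ (n : ℕ) :
    sphereVolume (n + 1) = (∫ x in 0..π, sin x ^ n) * sphereVolume n := by
  have hpow : π ^ (((n + 1 : ℕ) + 1 : ℝ) / 2) = √π * π ^ (((n : ℝ) + 1) / 2) := by
    rw [sqrt_eq_rpow, ← rpow_add pi_pos]
    push_cast
    ring_nf
  have hΓ : ((n + 1 : ℕ) + 1 : ℝ) / 2 = (n + 2) / 2 := by push_cast; ring
  have h1 := (Gamma_pos_of_pos (s := ((n : ℝ) + 1) / 2) (by positivity)).ne'
  have h2 := (Gamma_pos_of_pos (s := ((n : ℝ) + 2) / 2) (by positivity)).ne'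
  unfold sphereVolume
  rw [hpow, hΓ]
  field_simp
  linear_combination -Gamma_mul_integral_sin_pow n

/-- **Volumes of spheres inequality.** For natural numbers `n ≥ k ≥ 1`,
`n · c_n² · c_{k-1}² ≤ k · c_k² · c_{n-1}²`, with equality if and only if `n = k`. -/
theorem sphereVolume_inequality (n k : ℕ) (hk : 1 ≤ k) (hkn : k ≤ n) :
    (n : ℝ) * sphereVolume n ^ 2 * sphereVolume (k - 1) ^ 2
      ≤ (k : ℝ) * sphereVolume k ^ 2 * sphereVolume (n - 1) ^ 2
    ∧ ((n : ℝ) * sphereVolume n ^ 2 * sphereVolume (k - 1) ^ 2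
        = (k : ℝ) * sphereVolume k ^ 2 * sphereVolume (n - 1) ^ 2 ↔ n = k) := by
  obtain ⟨a, rfl⟩ := Nat.exists_eq_add_of_le' hk
  obtain ⟨b, rfl⟩ := Nat.exists_eq_add_of_le' (hk.trans hkn)
  have hsplit (m l : ℕ) : ((m + 1 : ℕ) : ℝ) * sphereVolume (m + 1) ^ 2 * sphereVolume l ^ 2
      = ((m : ℝ) + 1) * (∫ x in 0..π, sin x ^ m) ^ 2 * (sphereVolume m * sphereVolume l) ^ 2 := by
    rw [sphereVolume_succ]; push_cast; ring
  have hP : 0 < (sphereVolume a * sphereVolume b) ^ 2 := by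
    have := sphereVolume_pos a
    have := sphereVolume_pos b
    positivity
  simp only [Nat.add_sub_cancel, hsplit, mul_comm (sphereVolume b)]
  rw [mul_le_mul_iff_of_pos_right hP, mul_left_inj' hP.ne']
  have hf := strictAnti_mul_sq_integral_sin_pow
  exact ⟨hf.antitone (by omega), hf.injective.eq_iff.trans Nat.add_right_cancel_iff.symm⟩
end

section
/- The function x ↦ √x · Γ(x)/Γ(x + 1/2) is strictly decreasing on the interval (0, ∞). -/
/-!
Write `F x = x (Γ(x) / Γ(x + 1/2))²`, the square of the function in question. The functional
equation of `Γ` gives `F x = (1 + 1/(4x(x+1))) F (x + 1)`, with a strictly decreasing factor,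
and log-convexity of `Γ` (applied to the midpoints `x + 1/2` of `x, x + 1` and `x` of
`x - 1/2, x + 1/2`) squeezes `1 ≤ F x ≤ 1 + 1/(2x - 1)`, so `F x → 1`. For `s < t` the ratio
`F (s + n) / F (t + n)` is then nonincreasing in `n` with limit `1`, so `F` is antitone, and the
strict decrease of the factor makes it strictly antitone.
-/

open Real Set Filter Topology

theorem antitoneOn_of_eq_mul_add_one {f r : ℝ → ℝ} {L : ℝ} (hL : L ≠ 0)
    (hf : ∀ x, 0 < x → 0 < f x) (hr : AntitoneOn r (Ioi 0))
    (hrec : ∀ x, 0 < x → f x = r x * f (x + 1)) (hlim : Tendsto f atTop (𝓝 L)) :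
    AntitoneOn f (Ioi 0) := by
  intro s (hs : 0 < s) t (ht : 0 < t) hst
  have hshift : ∀ a, Tendsto (fun n : ℕ => f (a + n)) atTop (𝓝 L) := fun a =>
    hlim.comp (tendsto_atTop_add_const_left atTop a tendsto_natCast_atTop_atTop)
  set u : ℕ → ℝ := fun n => f (s + n) / f (t + n)
  have hu_anti : Antitone u := by
    refine antitone_nat_of_succ_le fun n => ?_
    have hs' : 0 < s + n := by positivity
    have ht' : 0 < t + n := by positivity
    simp only [u, Nat.cast_succ, ← add_assoc]
    rw [div_le_div_iff₀ (hf _ (by positivity)) (hf _ ht'), hrec _ hs', hrec _ ht']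
    have := mul_pos (hf _ (add_pos hs' one_pos)) (hf _ (add_pos ht' one_pos))
    have := hr hs' ht' (by linarith)
    nlinarith
  have hu_lim : Tendsto u atTop (𝓝 1) := div_self hL ▸ (hshift s).div (hshift t) hL
  have hu_zero := hu_anti.le_of_tendsto hu_lim 0
  simp only [u, Nat.cast_zero, add_zero] at hu_zero
  exact (one_le_div (hf t ht)).1 hu_zero

theorem strictAntiOn_of_eq_mul_add_one {f r : ℝ → ℝ} {L : ℝ} (hL : L ≠ 0)
    (hf : ∀ x, 0 < x → 0 < f x) (hr : StrictAntiOn r (Ioi 0))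
    (hrec : ∀ x, 0 < x → f x = r x * f (x + 1)) (hlim : Tendsto f atTop (𝓝 L)) :
    StrictAntiOn f (Ioi 0) := by
  intro x (hx : 0 < x) y (hy : 0 < y) hxy
  have hx1 : 0 < x + 1 := by linarith
  have hy1 : 0 < y + 1 := by linarith
  have hrx : 0 < r x := pos_of_mul_pos_left (hrec x hx ▸ hf x hx) (hf _ hx1).le
  calc f y = r y * f (y + 1) := hrec y hy
    _ < r x * f (y + 1) := mul_lt_mul_of_pos_right (hr hx hy hxy) (hf _ hy1)
    _ ≤ r x * f (x + 1) := by
      gcongr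
      exact antitoneOn_of_eq_mul_add_one hL hf hr.antitoneOn hrec hlim hx1 hy1 (by linarith)
    _ = f x := (hrec x hx).symm

theorem Real.Gamma_midpoint_sq_le {s t : ℝ} (hs : 0 < s) (ht : 0 < t) :
    Gamma ((s + t) / 2) ^ 2 ≤ Gamma s * Gamma t := by
  have h := Gamma_mul_add_mul_le_rpow_Gamma_mul_rpow_Gamma hs ht one_half_pos one_half_pos
    (add_halves 1)
  rw [← sqrt_eq_rpow, ← sqrt_eq_rpow, ← sqrt_mul (Gamma_pos_of_pos hs).le,
    le_sqrt (Gamma_pos_of_pos (by positivity)).le (by positivity [Gamma_pos_of_pos hs])] at h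
  convert h using 3
  ring

namespace BustozIsmail

noncomputable def gammaRatioSq (x : ℝ) : ℝ := x * (Gamma x / Gamma (x + 1 / 2)) ^ 2

theorem gammaRatioSq_pos {x : ℝ} (hx : 0 < x) : 0 < gammaRatioSq x := by
  have := Gamma_pos_of_pos hx
  have := Gamma_pos_of_pos (by linarith : 0 < x + 1 / 2)
  unfold gammaRatioSq
  positivity

theorem sqrt_gammaRatioSq {x : ℝ} (hx : 0 < x) :
    √(gammaRatioSq x) = √x * Gamma x / Gamma (x + 1 / 2) := by
  have := Gamma_pos_of_pos hx
  have := Gamma_pos_of_pos (by linarith : 0 < x + 1 / 2)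
  rw [gammaRatioSq, sqrt_mul hx.le, sqrt_sq (by positivity), mul_div_assoc]

theorem gammaRatioSq_eq_mul_add_one {x : ℝ} (hx : 0 < x) :
    gammaRatioSq x = (1 + (4 * x * (x + 1))⁻¹) * gammaRatioSq (x + 1) := by
  have hx' : 0 < x + 1 / 2 := by linarith
  have := (Gamma_pos_of_pos hx').ne'
  rw [gammaRatioSq, gammaRatioSq, Gamma_add_one hx.ne', add_right_comm,
    Gamma_add_one hx'.ne']
  field_simp
  ring

theorem strictAntiOn_one_add_inv_four_mul_mul_add_one :
    StrictAntiOn (fun x : ℝ => 1 + (4 * x * (x + 1))⁻¹) (Ioi 0) := by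
  intro x (hx : 0 < x) y (hy : 0 < y) hxy
  dsimp only
  gcongr

theorem one_le_gammaRatioSq {x : ℝ} (hx : 0 < x) : 1 ≤ gammaRatioSq x := by
  have hG := Gamma_pos_of_pos hx
  have hG' := Gamma_pos_of_pos (by linarith : 0 < x + 1 / 2)
  have h := Gamma_midpoint_sq_le hx (by linarith : 0 < x + 1)
  rw [show (x + (x + 1)) / 2 = x + 1 / 2 by ring, Gamma_add_one hx.ne'] at h
  rw [gammaRatioSq, div_pow, mul_div_assoc', one_le_div (by positivity)]
  linarith

theorem gammaRatioSq_le {x : ℝ} (hx : 1 / 2 < x) : gammaRatioSq x ≤ 1 + (2 * x - 1)⁻¹ := by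
  have hx' : 0 < x - 1 / 2 := by linarith
  have hG' := Gamma_pos_of_pos (by linarith : 0 < x + 1 / 2)
  have h := Gamma_midpoint_sq_le hx' (by linarith : 0 < x + 1 / 2)
  rw [show (x - 1 / 2 + (x + 1 / 2)) / 2 = x by ring] at h
  have hrec : Gamma (x + 1 / 2) = (x - 1 / 2) * Gamma (x - 1 / 2) := by
    rw [← Gamma_add_one hx'.ne']; ring_nf
  have hsq : (x - 1 / 2) * Gamma x ^ 2 ≤ Gamma (x + 1 / 2) ^ 2 :=
    calc (x - 1 / 2) * Gamma x ^ 2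
        ≤ (x - 1 / 2) * (Gamma (x - 1 / 2) * Gamma (x + 1 / 2)) := by gcongr
      _ = Gamma (x + 1 / 2) ^ 2 := by rw [hrec]; ring
  have hbound : 1 + (2 * x - 1)⁻¹ = x / (x - 1 / 2) := by
    have : 2 * x - 1 ≠ 0 := by linarith
    field_simp
    ring
  rw [hbound, gammaRatioSq, div_pow, mul_div_assoc', div_le_div_iff₀ (by positivity) hx']
  nlinarith

theorem tendsto_gammaRatioSq_atTop : Tendsto gammaRatioSq atTop (𝓝 1) := by
  have hupper : Tendsto (fun x : ℝ => 1 + (2 * x - 1)⁻¹) atTop (𝓝 1) := by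
    have h : Tendsto (fun x : ℝ => 2 * x - 1) atTop atTop :=
      tendsto_atTop_add_const_right _ _ (tendsto_id.const_mul_atTop two_pos)
    simpa using (tendsto_inv_atTop_zero.comp h).const_add (1 : ℝ)
  refine tendsto_of_tendsto_of_tendsto_of_le_of_le' tendsto_const_nhds hupper ?_ ?_
  · filter_upwards [eventually_gt_atTop 0] with x hx using one_le_gammaRatioSq hx
  · filter_upwards [eventually_gt_atTop (1 / 2)] with x hx using gammaRatioSq_le hx

theorem strictAntiOn_gammaRatioSq : StrictAntiOn gammaRatioSq (Ioi 0) :=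
  strictAntiOn_of_eq_mul_add_one one_ne_zero (fun _ => gammaRatioSq_pos)
    strictAntiOn_one_add_inv_four_mul_mul_add_one (fun _ => gammaRatioSq_eq_mul_add_one)
    tendsto_gammaRatioSq_atTop

end BustozIsmail

open BustozIsmail in
/-- **Bustoz–Ismail.** The function `x ↦ √x · Γ(x)/Γ(x + 1/2)` is strictly
decreasing on `(0, ∞)`. -/
theorem sqrt_mul_gamma_div_gamma_strictAntiOn :
    StrictAntiOn (fun x : ℝ => Real.sqrt x * Real.Gamma x / Real.Gamma (x + 1 / 2))
      (Set.Ioi (0 : ℝ)) := by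
  intro x (hx : 0 < x) y (hy : 0 < y) hxy
  simp only [← sqrt_gammaRatioSq hx, ← sqrt_gammaRatioSq hy]
  exact sqrt_lt_sqrt (gammaRatioSq_pos hy).le (strictAntiOn_gammaRatioSq hx hy hxy)
end

section
/- For every natural number n ≥ 1, Γ((n+1)/2)/Γ(n/2) < n/√(2n+1) (Gurland's inequality). -/
open MeasureTheory Set Real

private lemma gur_Gint {s : ℝ} (hs : 0 < s) :
    IntegrableOn (fun t : ℝ => t ^ (s - 1) * Real.exp (-t)) (Ioi 0) := by
  exact (Real.GammaIntegral_convergent hs).congr_fun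
    (fun t _ => mul_comm _ _) measurableSet_Ioi

private lemma gur_Gval {s : ℝ} (hs : 0 < s) :
    ∫ t in Ioi (0:ℝ), t ^ (s - 1) * Real.exp (-t) = Real.Gamma s := by
  rw [Real.Gamma_eq_integral hs]
  exact setIntegral_congr_fun measurableSet_Ioi fun t _ => mul_comm _ _

private lemma gur_eqon (x l : ℝ) :
    EqOn (fun t : ℝ => (Real.sqrt t - l * (t + x)) ^ 2 * (t ^ (x - 1) * Real.exp (-t)))
      (fun t : ℝ =>
        ∑ i : Fin 5, (![1 + 2 * l ^ 2 * x, l ^ 2, l ^ 2 * x ^ 2, -(2 * l), -(2 * l * x)] i) *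
          (t ^ ((![x + 1, x + 2, x, x + 3/2, x + 1/2] i) - 1) * Real.exp (-t))) (Ioi 0) := by
  intro t ht
  have ht' : (0:ℝ) < t := ht
  have hadd : ∀ a b : ℝ, t ^ (a + b) = t ^ a * t ^ b := fun a b => Real.rpow_add ht' a b
  have h1 : t ^ ((x + 1) - 1) = t ^ (x - 1) * t := by
    rw [show (x + 1) - 1 = (x - 1) + 1 by ring, hadd, Real.rpow_one]
  have h2 : t ^ ((x + 2) - 1) = t ^ (x - 1) * (t * t) := by
    rw [show (x + 2) - 1 = (x - 1) + (1 + 1) by ring, hadd, hadd, Real.rpow_one]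
  have h3 : t ^ ((x + 3/2) - 1) = t ^ (x - 1) * (t * Real.sqrt t) := by
    rw [show (x + 3/2) - 1 = (x - 1) + (1 + 1/2) by ring, hadd, hadd, Real.rpow_one,
      Real.sqrt_eq_rpow]
  have h4 : t ^ ((x + 1/2) - 1) = t ^ (x - 1) * Real.sqrt t := by
    rw [show (x + 1/2) - 1 = (x - 1) + 1/2 by ring, hadd, Real.sqrt_eq_rpow]
  have hsq : Real.sqrt t * Real.sqrt t = t := Real.mul_self_sqrt ht'.le
  simp only [Fin.sum_univ_five, Matrix.cons_val_zero, Matrix.cons_val_one, Matrix.head_cons,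
    Matrix.cons_val_two, Matrix.tail_cons, Matrix.cons_val_three, Matrix.cons_val_four,
    h1, h2, h3, h4]
  linear_combination (t ^ (x - 1) * Real.exp (-t)) * hsq

private lemma gur_expand (x l : ℝ) (hx : 0 < x) :
    ∫ t in Ioi (0:ℝ), (Real.sqrt t - l * (t + x)) ^ 2 * (t ^ (x - 1) * Real.exp (-t))
      = Real.Gamma (x + 1) + 2 * l ^ 2 * x * Real.Gamma (x + 1)
        + l ^ 2 * Real.Gamma (x + 2) + l ^ 2 * x ^ 2 * Real.Gamma x
        - 2 * l * Real.Gamma (x + 3/2) - 2 * l * x * Real.Gamma (x + 1/2) := by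
  have hpos : ∀ i : Fin 5, 0 < (![x + 1, x + 2, x, x + 3/2, x + 1/2] i) := by
    intro i
    fin_cases i <;> simp <;> linarith
  rw [setIntegral_congr_fun measurableSet_Ioi (gur_eqon x l)]
  rw [integral_finset_sum Finset.univ
    (fun i _ => ((gur_Gint (hpos i)).const_mul _))]
  simp only [integral_const_mul]
  rw [Fin.sum_univ_five]
  simp only [Matrix.cons_val_zero, Matrix.cons_val_one, Matrix.head_cons,
    Matrix.cons_val_two, Matrix.tail_cons, Matrix.cons_val_three, Matrix.cons_val_four]
  rw [gur_Gval (show (0:ℝ) < x + 1 by linarith), gur_Gval (show (0:ℝ) < x + 2 by linarith),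
    gur_Gval hx, gur_Gval (show (0:ℝ) < x + 3/2 by linarith),
    gur_Gval (show (0:ℝ) < x + 1/2 by linarith)]
  ring

private lemma gur_pos (x l : ℝ) (hx : 0 < x) :
    0 < ∫ t in Ioi (0:ℝ), (Real.sqrt t - l * (t + x)) ^ 2 * (t ^ (x - 1) * Real.exp (-t)) := by
  set k : ℝ → ℝ := fun t => (Real.sqrt t - l * (t + x)) ^ 2 * (t ^ (x - 1) * Real.exp (-t))
    with hk
  have hpos5 : ∀ i : Fin 5, 0 < (![x + 1, x + 2, x, x + 3/2, x + 1/2] i) := by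
    intro i
    fin_cases i <;> simp <;> linarith
  have hint : IntegrableOn k (Ioi 0) := by
    have isum : IntegrableOn (fun t : ℝ =>
        ∑ i : Fin 5, (![1 + 2 * l ^ 2 * x, l ^ 2, l ^ 2 * x ^ 2, -(2 * l), -(2 * l * x)] i) *
          (t ^ ((![x + 1, x + 2, x, x + 3/2, x + 1/2] i) - 1) * Real.exp (-t))) (Ioi 0) :=
      integrable_finset_sum Finset.univ (fun i _ => ((gur_Gint (hpos5 i)).const_mul _))
    exact isum.congr_fun (fun t ht => ((gur_eqon x l) ht).symm) measurableSet_Ioi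
  obtain ⟨t₀, ht₀, hne⟩ : ∃ t₀ : ℝ, 0 < t₀ ∧ Real.sqrt t₀ - l * (t₀ + x) ≠ 0 := by
    by_cases h1 : Real.sqrt 1 - l * (1 + x) ≠ 0
    · exact ⟨1, one_pos, h1⟩
    by_cases h2 : Real.sqrt 4 - l * (4 + x) ≠ 0
    · exact ⟨4, by norm_num, h2⟩
    refine ⟨9, by norm_num, fun h3 => ?_⟩
    push_neg at h1 h2
    rw [Real.sqrt_one] at h1
    rw [show (4:ℝ) = 2 ^ 2 by norm_num, Real.sqrt_sq (by norm_num : (0:ℝ) ≤ 2)] at h2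
    rw [show (9:ℝ) = 3 ^ 2 by norm_num, Real.sqrt_sq (by norm_num : (0:ℝ) ≤ 3)] at h3
    nlinarith [h1, h2, h3]
  have hk0 : 0 < k t₀ := by
    have h5 := Real.rpow_pos_of_pos ht₀ (x - 1)
    have h6 := Real.exp_pos (-t₀)
    have h7 := sq_pos_of_ne_zero hne
    have : k t₀ = (Real.sqrt t₀ - l * (t₀ + x)) ^ 2 * (t₀ ^ (x - 1) * Real.exp (-t₀)) := rfl
    rw [this]
    positivity
  have hcont : ContinuousAt k t₀ := by
    have c1 : ContinuousAt (fun t : ℝ => t ^ (x - 1)) t₀ :=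
      Real.continuousAt_rpow_const t₀ (x - 1) (Or.inl ht₀.ne')
    exact ((Real.continuous_sqrt.continuousAt.sub
      (((continuous_id.add continuous_const).continuousAt).const_mul l)).pow 2).mul
      (c1.mul ((Real.continuous_exp.comp continuous_neg).continuousAt))
  have hmem : k ⁻¹' (Ioi 0) ∩ Ioi 0 ∈ nhds t₀ :=
    Filter.inter_mem (hcont (Ioi_mem_nhds hk0)) (Ioi_mem_nhds ht₀)
  obtain ⟨U, hUsub, hUopen, ht₀U⟩ := mem_nhds_iff.mp hmem
  have hsupp : 0 < volume (Function.support k ∩ Ioi 0) := by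
    refine lt_of_lt_of_le (hUopen.measure_pos volume ⟨t₀, ht₀U⟩) (measure_mono ?_)
    intro t htU
    obtain ⟨hh1, hh2⟩ := hUsub htU
    exact ⟨ne_of_gt hh1, hh2⟩
  rw [setIntegral_pos_iff_support_of_nonneg_ae ?_ hint]
  · exact hsupp
  · refine (ae_restrict_iff' measurableSet_Ioi).mpr (ae_of_all _ fun t ht => ?_)
    have ht' : (0:ℝ) < t := ht
    have : k t = (Real.sqrt t - l * (t + x)) ^ 2 * (t ^ (x - 1) * Real.exp (-t)) := rfl
    rw [this]
    positivity

/-- **Gurland's inequality.** For every natural number `n ≥ 1`,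
`Γ((n+1)/2)/Γ(n/2) < n/√(2n+1)`. -/
theorem gurland_inequality (n : ℕ) (hn : 1 ≤ n) :
    Real.Gamma (((n : ℝ) + 1) / 2) / Real.Gamma ((n : ℝ) / 2)
      < (n : ℝ) / Real.sqrt (2 * (n : ℝ) + 1) := by
  set x : ℝ := (n : ℝ) / 2 with hxdef
  have hn' : (1:ℝ) ≤ (n:ℝ) := by exact_mod_cast hn
  have hx : 0 < x := by rw [hxdef]; linarith
  rw [show ((n : ℝ) + 1) / 2 = x + 1/2 by rw [hxdef]; ring,
    show (n : ℝ) = 2 * x by rw [hxdef]; ring,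
    show 2 * (2 * x) + 1 = 4 * x + 1 by ring]
  set G0 := Real.Gamma x with hG0def
  set G1 := Real.Gamma (x + 1/2) with hG1def
  have hG0 : 0 < G0 := Real.Gamma_pos_of_pos hx
  have hG1 : 0 < G1 := Real.Gamma_pos_of_pos (by linarith)
  have hGa1 : Real.Gamma (x + 1) = x * G0 := Real.Gamma_add_one hx.ne'
  have hGa2 : Real.Gamma (x + 2) = (x + 1) * (x * G0) := by
    rw [show x + 2 = (x + 1) + 1 by ring, Real.Gamma_add_one (by positivity), hGa1]
  have hGa3 : Real.Gamma (x + 3/2) = (x + 1/2) * G1 := by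
    rw [show x + 3/2 = (x + 1/2) + 1 by ring, Real.Gamma_add_one (by positivity), hG1def]
  set A := x * G0 with hA
  set B := (2 * x + 1/2) * G1 with hB
  set C := x * (4 * x + 1) * G0 with hC
  have hCpos : 0 < C := by rw [hC]; positivity
  have key : 0 < A - 2 * (B / C) * B + (B / C) ^ 2 * C := by
    have h := gur_pos x (B / C) hx
    rw [gur_expand x (B / C) hx, hGa1, hGa2, hGa3] at h
    calc (0:ℝ) < _ := h
    _ = A - 2 * (B / C) * B + (B / C) ^ 2 * C := by rw [hA, hB, hC]; ring
  have hBAC : B ^ 2 < A * C := by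
    have he : A - 2 * (B / C) * B + (B / C) ^ 2 * C = (A * C - B ^ 2) / C := by
      field_simp
      ring
    rw [he] at key
    rcases div_pos_iff.mp key with ⟨h, _⟩ | ⟨_, h⟩
    · linarith
    · linarith
  have hkey : (4 * x + 1) ^ 2 * G1 ^ 2 < 4 * x ^ 2 * (4 * x + 1) * G0 ^ 2 := by
    rw [hA, hB, hC] at hBAC
    nlinarith [hBAC]
  have h4x : (0:ℝ) < 4 * x + 1 := by linarith
  have hkey2 : (4 * x + 1) * G1 ^ 2 < 4 * x ^ 2 * G0 ^ 2 := by
    nlinarith [hkey, h4x]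
  have hrhs : (0:ℝ) ≤ 2 * x / Real.sqrt (4 * x + 1) := by positivity
  refine lt_of_pow_lt_pow_left₀ 2 hrhs ?_
  rw [div_pow, div_pow, Real.sq_sqrt h4x.le]
  rw [div_lt_div_iff₀ (by positivity) h4x]
  calc G1 ^ 2 * (4 * x + 1) = (4 * x + 1) * G1 ^ 2 := by ring
  _ < 4 * x ^ 2 * G0 ^ 2 := hkey2
  _ = (2 * x) ^ 2 * G0 ^ 2 := by ring
end

section
/- Let m ≥ 1 and let d : ℤ^m × ℤ^m → [0,∞) be a metric on ℤ^m that is equivariant with respect to the action of ℤ^m on itself by addition, i.e., d(a + c, b + c) = d(a, b) for all a, b, c ∈ ℤ^m. Then there exists a unique seminorm ‖·‖_∞ on ℝ^m such that for every v ∈ ℤ^m (viewed inside ℝ^m via the standard inclusion), ‖v‖_∞ = lim_{n→∞} d(0, n·v)/n, where the limit is taken over positive integers n. -/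
/-!
For an equivariant metric, `g ↦ d 0 g` is a group seminorm on `ℤ^m`, and Fekete's lemma turns it
into the stable norm `F v = lim d(0, n • v) / n`, which is subadditive and `ℤ`-homogeneous, i.e. a
`Seminorm ℤ`. Such an `F` is Lipschitz for the sup norm, so along any integer sequence `a n` staying
within bounded distance of the ray `n • x` the averages `F (a n) / n` converge to one common limit.
This limit is the seminorm on `ℝ^m`: each seminorm axiom comes from a suitable choice of tracking
sequence. A real seminorm is recovered from its values on `ℤ^m` in the same way, which gives
uniqueness.
-/

open Filter Topology

section StableNorm

variable {G : Type*} [AddCommGroup G]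

def AddGroupSeminorm.ofInvariantDist (d : G → G → ℝ) (hd_symm : ∀ a b, d a b = d b a)
    (hd_triangle : ∀ a b c, d a c ≤ d a b + d b c) (hd_zero : d 0 0 = 0)
    (hd_invariant : ∀ a b c, d (a + c) (b + c) = d a b) : AddGroupSeminorm G where
  toFun g := d 0 g
  map_zero' := hd_zero
  add_le' a b := by
    have := hd_invariant 0 b a
    rw [zero_add, add_comm] at this
    linarith [hd_triangle 0 a (a + b)]
  neg' a := by
    rw [← hd_invariant 0 (-a) a, zero_add, neg_add_cancel, hd_symm]

namespace AddGroupSeminorm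

variable (p : AddGroupSeminorm G)

theorem subadditive_nsmul (g : G) : Subadditive fun n : ℕ => p (n • g) := fun a b => by
  simpa only [add_nsmul] using map_add_le_add p _ _

noncomputable def stableNorm (g : G) : ℝ := (p.subadditive_nsmul g).lim

theorem tendsto_stableNorm (g : G) :
    Tendsto (fun n : ℕ => p (n • g) / n) atTop (𝓝 (p.stableNorm g)) :=
  (p.subadditive_nsmul g).tendsto_lim ⟨0, by rintro _ ⟨n, rfl⟩; positivity⟩

theorem stableNorm_add_le (g h : G) : p.stableNorm (g + h) ≤ p.stableNorm g + p.stableNorm h :=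
  le_of_tendsto_of_tendsto' (p.tendsto_stableNorm _)
    ((p.tendsto_stableNorm g).add (p.tendsto_stableNorm h)) fun n => by
      rw [nsmul_add, ← add_div]
      gcongr
      exact map_add_le_add p _ _

theorem stableNorm_neg (g : G) : p.stableNorm (-g) = p.stableNorm g :=
  tendsto_nhds_unique (p.tendsto_stableNorm _) <| by
    simpa only [neg_nsmul, map_neg_eq_map] using p.tendsto_stableNorm g

theorem stableNorm_nsmul (k : ℕ) (g : G) : p.stableNorm (k • g) = k * p.stableNorm g := by
  rcases Nat.eq_zero_or_pos k with rfl | hk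
  · rw [zero_smul, Nat.cast_zero, zero_mul]
    exact tendsto_nhds_unique (p.tendsto_stableNorm 0) (by simp)
  have hkn : Tendsto (fun n : ℕ => k * n) atTop atTop :=
    tendsto_atTop_mono (fun n => Nat.le_mul_of_pos_left n hk) tendsto_id
  refine tendsto_nhds_unique (p.tendsto_stableNorm _) <|
    (((p.tendsto_stableNorm g).comp hkn).const_mul (k : ℝ)).congr' ?_
  filter_upwards [eventually_ne_atTop 0] with n hn
  simp only [Function.comp_apply, Nat.cast_mul, smul_smul, mul_comm n k]
  field_simp

theorem stableNorm_zsmul (k : ℤ) (g : G) : p.stableNorm (k • g) = ‖k‖ * p.stableNorm g := by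
  obtain ⟨j, rfl | rfl⟩ := k.eq_nat_or_neg
  · simp [stableNorm_nsmul]
  · simp [stableNorm_neg, stableNorm_nsmul]

noncomputable def stableSeminorm : Seminorm ℤ G :=
  Seminorm.of p.stableNorm p.stableNorm_add_le p.stableNorm_zsmul

theorem tendsto_stableSeminorm (g : G) :
    Tendsto (fun n : ℕ => p (n • g) / n) atTop (𝓝 (p.stableSeminorm g)) :=
  p.tendsto_stableNorm g

end AddGroupSeminorm

end StableNorm

theorem tendsto_div_natCast_of_abs_sub_le {u v : ℕ → ℝ} {L K : ℝ}
    (hv : Tendsto (fun n => v n / n) atTop (𝓝 L)) (h : ∀ n, |u n - v n| ≤ K) :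
    Tendsto (fun n => u n / n) atTop (𝓝 L) := by
  have hdiff : Tendsto (fun n => (u n - v n) / n) atTop (𝓝 0) :=
    squeeze_zero_norm (fun n => by rw [norm_div, Real.norm_natCast]; gcongr; exact h n)
      (tendsto_const_div_atTop_nhds_zero_nat K)
  simpa [sub_div] using hv.add hdiff

theorem Seminorm.le_sum_single_mul_norm {ι 𝕜 : Type*} [Fintype ι] [DecidableEq ι]
    [SeminormedRing 𝕜] (p : Seminorm 𝕜 (ι → 𝕜)) (x : ι → 𝕜) :
    p x ≤ (∑ i, p (Pi.single i 1)) * ‖x‖ := by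
  calc p x = p (∑ i, x i • Pi.single i 1) := by
        simp_rw [← Pi.single_smul', smul_eq_mul, mul_one, Finset.univ_sum_single]
    _ ≤ ∑ i, p (x i • Pi.single i 1) :=
        Finset.le_sum_of_subadditive p (map_zero p).le (map_add_le_add p) _ _
    _ ≤ ∑ i, ‖x‖ * p (Pi.single i 1) := by
        gcongr with i
        rw [map_smul_eq_mul]
        gcongr
        exact norm_le_pi_norm x i
    _ = (∑ i, p (Pi.single i 1)) * ‖x‖ := by rw [← Finset.mul_sum, mul_comm]

section LatticeApproximation

variable {ι : Type*}

def latticeCast : (ι → ℤ) →+ (ι → ℝ) := (Int.castAddHom ℝ).compLeft ι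

@[simp]
theorem latticeCast_apply (a : ι → ℤ) (i : ι) : latticeCast a i = a i := rfl

noncomputable def latticeFloor (x : ι → ℝ) : ι → ℤ := fun i => ⌊x i⌋

variable [Fintype ι]

theorem norm_le_norm_latticeCast (a : ι → ℤ) : ‖a‖ ≤ ‖latticeCast a‖ :=
  (pi_norm_le_iff_of_nonneg (norm_nonneg _)).2 fun i => by
    simpa only [latticeCast_apply, Int.norm_cast_real] using norm_le_pi_norm (latticeCast a) i

theorem norm_latticeCast_latticeFloor_sub_le (x : ι → ℝ) :
    ‖latticeCast (latticeFloor x) - x‖ ≤ 1 :=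
  (pi_norm_le_iff_of_nonneg zero_le_one).2 fun i => by
    rw [Pi.sub_apply, latticeCast_apply, latticeFloor, Real.norm_eq_abs, abs_sub_comm,
      Int.self_sub_floor, Int.abs_fract]
    exact (Int.fract_lt_one _).le

def TracksRay (x : ι → ℝ) (a : ℕ → ι → ℤ) : Prop :=
  ∃ K, ∀ n : ℕ, ‖latticeCast (a n) - (n : ℝ) • x‖ ≤ K

namespace TracksRay

variable {x y : ι → ℝ} {a b : ℕ → ι → ℤ}

theorem latticeFloor_smul (x : ι → ℝ) : TracksRay x fun n => latticeFloor ((n : ℝ) • x) :=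
  ⟨1, fun _ => norm_latticeCast_latticeFloor_sub_le _⟩

theorem nsmul (v : ι → ℤ) : TracksRay (latticeCast v) fun n => n • v :=
  ⟨0, fun n => by rw [map_nsmul, Nat.cast_smul_eq_nsmul, sub_self, norm_zero]⟩

theorem add (ha : TracksRay x a) (hb : TracksRay y b) : TracksRay (x + y) (a + b) := by
  obtain ⟨K, hK⟩ := ha
  obtain ⟨L, hL⟩ := hb
  refine ⟨K + L, fun n => ?_⟩
  calc ‖latticeCast ((a + b) n) - (n : ℝ) • (x + y)‖
      = ‖(latticeCast (a n) - (n : ℝ) • x) + (latticeCast (b n) - (n : ℝ) • y)‖ := by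
        rw [Pi.add_apply, map_add, smul_add, add_sub_add_comm]
    _ ≤ K + L := (norm_add_le _ _).trans (add_le_add (hK n) (hL n))

theorem neg (ha : TracksRay x a) : TracksRay (-x) (-a) := by
  obtain ⟨K, hK⟩ := ha
  exact ⟨K, fun n => by rw [Pi.neg_apply, map_neg, smul_neg, ← neg_sub', norm_neg]; exact hK n⟩

theorem exists_norm_sub_le (ha : TracksRay x a) (hb : TracksRay x b) :
    ∃ K, ∀ n, ‖latticeCast (a n) - latticeCast (b n)‖ ≤ K := by
  obtain ⟨K, hK⟩ := ha.add hb.neg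
  exact ⟨K, fun n => by simpa [sub_eq_add_neg] using hK n⟩

theorem comp_smul {k : ℕ → ℕ} {l c : ℝ} (ha : TracksRay x a)
    (hk : ∀ n, |(k n : ℝ) - l * n| ≤ c) : TracksRay (l • x) (a ∘ k) := by
  obtain ⟨K, hK⟩ := ha
  refine ⟨K + c * ‖x‖, fun n => ?_⟩
  calc ‖latticeCast (a (k n)) - (n : ℝ) • l • x‖
      = ‖(latticeCast (a (k n)) - (k n : ℝ) • x) + ((k n : ℝ) - l * n) • x‖ := by
        rw [smul_smul, sub_smul, mul_comm]; abel_nf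
    _ ≤ K + c * ‖x‖ := by
        refine (norm_add_le _ _).trans (add_le_add (hK _) ?_)
        rw [norm_smul, Real.norm_eq_abs]
        gcongr
        exact hk n

theorem exists_norm_add_sub_le (ha : TracksRay x a) :
    ∃ K, ∀ m n, ‖latticeCast (a (m + n)) - latticeCast (a m + a n)‖ ≤ K := by
  obtain ⟨K, hK⟩ := ha
  refine ⟨3 * K, fun m n => ?_⟩
  calc ‖latticeCast (a (m + n)) - latticeCast (a m + a n)‖
      = ‖(latticeCast (a (m + n)) - ((m + n : ℕ) : ℝ) • x) - (latticeCast (a m) - (m : ℝ) • x)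
          - (latticeCast (a n) - (n : ℝ) • x)‖ := by
        rw [map_add, Nat.cast_add, add_smul]; abel_nf
    _ ≤ K + K + K :=
        (norm_sub_le_of_le (norm_sub_le_of_le (hK _) (hK _)) (hK _))
    _ = 3 * K := by ring

end TracksRay

end LatticeApproximation

namespace Seminorm

variable {ι : Type*} [Fintype ι] (F : Seminorm ℤ (ι → ℤ)) {x : ι → ℝ} {a b : ℕ → ι → ℤ}

theorem exists_abs_sub_le_mul_norm_latticeCast :
    ∃ C, 0 ≤ C ∧ ∀ a b, |F a - F b| ≤ C * ‖latticeCast a - latticeCast b‖ := by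
  classical
  refine ⟨∑ i, F (Pi.single i 1), Finset.sum_nonneg fun i _ => apply_nonneg F _, fun a b => ?_⟩
  calc |F a - F b| ≤ F (a - b) := abs_sub_map_le_sub F a b
    _ ≤ (∑ i, F (Pi.single i 1)) * ‖a - b‖ := F.le_sum_single_mul_norm _
    _ ≤ (∑ i, F (Pi.single i 1)) * ‖latticeCast a - latticeCast b‖ := by
        rw [← map_sub]
        gcongr
        exact norm_le_norm_latticeCast _

theorem exists_abs_sub_le_of_tracksRay (ha : TracksRay x a) (hb : TracksRay x b) :
    ∃ K, ∀ n, |F (a n) - F (b n)| ≤ K := by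
  obtain ⟨C, hC, hF⟩ := F.exists_abs_sub_le_mul_norm_latticeCast
  obtain ⟨K, hK⟩ := ha.exists_norm_sub_le hb
  exact ⟨C * K, fun n => (hF _ _).trans (mul_le_mul_of_nonneg_left (hK n) hC)⟩

/-- Along a tracking sequence `F ∘ a` is subadditive up to a constant, so Fekete's lemma applies. -/
theorem exists_tendsto_div_of_tracksRay (ha : TracksRay x a) :
    ∃ L, Tendsto (fun n => F (a n) / n) atTop (𝓝 L) := by
  obtain ⟨C, hC, hF⟩ := F.exists_abs_sub_le_mul_norm_latticeCast
  obtain ⟨K, hK⟩ := ha.exists_norm_add_sub_le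
  have hsub : Subadditive fun n => F (a n) + C * K := fun m n => by
    have := (abs_le.1 (hF (a (m + n)) (a m + a n))).2
    linarith [map_add_le_add F (a m) (a n), mul_le_mul_of_nonneg_left (hK m n) hC]
  have hCK : 0 ≤ C * K := mul_nonneg hC ((norm_nonneg _).trans (hK 0 0))
  have hbdd : BddBelow (Set.range fun n : ℕ => (F (a n) + C * K) / n) :=
    ⟨0, by rintro _ ⟨n, rfl⟩; positivity⟩
  exact ⟨_, tendsto_div_natCast_of_abs_sub_le (hsub.tendsto_lim hbdd) (K := C * K)
    fun n => by rw [sub_add_cancel_left, abs_neg, abs_of_nonneg hCK]⟩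

noncomputable def extendRealFun (x : ι → ℝ) : ℝ :=
  limUnder atTop fun n : ℕ => F (latticeFloor ((n : ℝ) • x)) / n

theorem tendsto_extendRealFun (ha : TracksRay x a) :
    Tendsto (fun n => F (a n) / n) atTop (𝓝 (F.extendRealFun x)) := by
  have hfloor := TracksRay.latticeFloor_smul x
  obtain ⟨K, hK⟩ := F.exists_abs_sub_le_of_tracksRay ha hfloor
  exact tendsto_div_natCast_of_abs_sub_le
    (tendsto_nhds_limUnder (F.exists_tendsto_div_of_tracksRay hfloor)) hK

theorem extendRealFun_latticeCast (v : ι → ℤ) : F.extendRealFun (latticeCast v) = F v := by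
  refine tendsto_nhds_unique (F.tendsto_extendRealFun (TracksRay.nsmul v)) ?_
  refine tendsto_const_nhds.congr' ?_
  filter_upwards [eventually_ne_atTop 0] with n hn
  rw [← natCast_zsmul, map_smul_eq_mul, Int.norm_natCast]
  field_simp

theorem extendRealFun_add_le (x y : ι → ℝ) :
    F.extendRealFun (x + y) ≤ F.extendRealFun x + F.extendRealFun y := by
  have hx := TracksRay.latticeFloor_smul x
  have hy := TracksRay.latticeFloor_smul y
  refine le_of_tendsto_of_tendsto' (F.tendsto_extendRealFun (hx.add hy))
    ((F.tendsto_extendRealFun hx).add (F.tendsto_extendRealFun hy)) fun n => ?_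
  rw [← add_div]
  gcongr
  exact map_add_le_add F _ _

theorem extendRealFun_neg (x : ι → ℝ) : F.extendRealFun (-x) = F.extendRealFun x := by
  have hx := TracksRay.latticeFloor_smul x
  refine tendsto_nhds_unique (F.tendsto_extendRealFun hx.neg) ?_
  simpa only [Pi.neg_apply, map_neg_eq_map] using F.tendsto_extendRealFun hx

/-- `n ↦ ⌊⌊l n⌋₊ • x⌋` tracks `l • x` and reparametrises the floor sequence defining the value
at `x`. -/
theorem extendRealFun_smul_of_pos {l : ℝ} (hl : 0 < l) (x : ι → ℝ) :
    F.extendRealFun (l • x) = l * F.extendRealFun x := by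
  have hx := TracksRay.latticeFloor_smul x
  set k : ℕ → ℕ := fun n => ⌊l * n⌋₊
  have hk : Tendsto k atTop atTop := tendsto_nat_floor_mul_atTop l hl
  have hk_div : Tendsto (fun n : ℕ => (k n : ℝ) / n) atTop (𝓝 l) :=
    (tendsto_nat_floor_mul_div_atTop hl.le).comp tendsto_natCast_atTop_atTop
  have hk_near : ∀ n, |(k n : ℝ) - l * n| ≤ 1 := fun n => by
    have := Nat.lt_floor_add_one (l * n)
    rw [abs_le]
    constructor <;> linarith [Nat.floor_le (by positivity : 0 ≤ l * n)]
  refine tendsto_nhds_unique (F.tendsto_extendRealFun (hx.comp_smul hk_near)) ?_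
  refine (hk_div.mul ((F.tendsto_extendRealFun hx).comp hk)).congr' ?_
  filter_upwards [hk.eventually_ne_atTop 0] with n hn
  simp only [Function.comp_apply]
  field_simp

theorem extendRealFun_smul (l : ℝ) (x : ι → ℝ) :
    F.extendRealFun (l • x) = ‖l‖ * F.extendRealFun x := by
  rcases lt_trichotomy l 0 with hl | rfl | hl
  · rw [← neg_neg l, neg_smul, extendRealFun_neg, norm_neg, Real.norm_of_nonneg (by linarith),
      F.extendRealFun_smul_of_pos (neg_pos.2 hl)]
  · simpa using F.extendRealFun_latticeCast 0
  · rw [Real.norm_of_nonneg hl.le, F.extendRealFun_smul_of_pos hl]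

noncomputable def extendReal : Seminorm ℝ (ι → ℝ) :=
  Seminorm.of F.extendRealFun F.extendRealFun_add_le F.extendRealFun_smul

theorem extendReal_apply (x : ι → ℝ) : F.extendReal x = F.extendRealFun x := rfl

theorem extendReal_latticeCast (v : ι → ℤ) : F.extendReal (latticeCast v) = F v :=
  F.extendRealFun_latticeCast v

theorem tendsto_div_of_tracksRay (p : Seminorm ℝ (ι → ℝ)) (ha : TracksRay x a) :
    Tendsto (fun n => p (latticeCast (a n)) / n) atTop (𝓝 (p x)) := by
  classical
  obtain ⟨K, hK⟩ := ha
  have hray : Tendsto (fun n : ℕ => p ((n : ℝ) • x) / n) atTop (𝓝 (p x)) := by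
    refine tendsto_const_nhds.congr' ?_
    filter_upwards [eventually_ne_atTop 0] with n hn
    rw [map_smul_eq_mul, Real.norm_natCast]
    field_simp
  refine tendsto_div_natCast_of_abs_sub_le hray (K := (∑ i, p (Pi.single i 1)) * K) fun n => ?_
  calc |p (latticeCast (a n)) - p ((n : ℝ) • x)| ≤ p (latticeCast (a n) - (n : ℝ) • x) :=
        abs_sub_map_le_sub p _ _
    _ ≤ (∑ i, p (Pi.single i 1)) * K := (p.le_sum_single_mul_norm _).trans <| by
        gcongr
        exact hK n

theorem eq_extendReal (p : Seminorm ℝ (ι → ℝ)) (hp : ∀ v, p (latticeCast v) = F v) :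
    p = F.extendReal := by
  ext x
  rw [extendReal_apply]
  have hx := TracksRay.latticeFloor_smul x
  refine tendsto_nhds_unique (tendsto_div_of_tracksRay p hx) ?_
  simpa only [hp] using F.tendsto_extendRealFun hx

end Seminorm

theorem equivariant_metric_asymptotic_seminorm_general
    (m : ℕ) (d : (Fin m → ℤ) → (Fin m → ℤ) → ℝ)
    (hd_symm : ∀ a b, d a b = d b a)
    (hd_triangle : ∀ a b c, d a c ≤ d a b + d b c)
    (hd_eq_zero : ∀ a b, d a b = 0 ↔ a = b)
    (hd_equivariant : ∀ a b c, d (a + c) (b + c) = d a b) :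
    ∃! N : (Fin m → ℝ) → ℝ,
      ((∀ w, 0 ≤ N w)
        ∧ (∀ (l : ℝ) (w : Fin m → ℝ), N (l • w) = |l| * N w)
        ∧ (∀ w w' : Fin m → ℝ, N (w + w') ≤ N w + N w'))
      ∧ ∀ v : Fin m → ℤ,
          Tendsto (fun n : ℕ => d 0 ((n : ℤ) • v) / (n : ℝ)) atTop
            (nhds (N (fun i => (v i : ℝ)))) := by
  set F := (AddGroupSeminorm.ofInvariantDist d hd_symm hd_triangle ((hd_eq_zero 0 0).2 rfl)
    hd_equivariant).stableSeminorm
  have hF : ∀ v, Tendsto (fun n : ℕ => d 0 ((n : ℤ) • v) / n) atTop (𝓝 (F v)) := fun v => by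
    simp only [natCast_zsmul]
    exact AddGroupSeminorm.tendsto_stableSeminorm _ v
  refine ⟨F.extendReal, ⟨⟨apply_nonneg _, fun l w => ?_, map_add_le_add _⟩, fun v => ?_⟩, ?_⟩
  · rw [map_smul_eq_mul, Real.norm_eq_abs]
  · exact F.extendReal_latticeCast v ▸ hF v
  rintro N ⟨⟨-, hN_smul, hN_add⟩, hN⟩
  let p : Seminorm ℝ (Fin m → ℝ) :=
    Seminorm.of N hN_add fun l w => by rw [hN_smul, Real.norm_eq_abs]
  exact congrArg DFunLike.coe (F.eq_extendReal p fun v => tendsto_nhds_unique (hN v) (hF v))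

/-- **Burago–Burago–Ivanov (asymptotic seminorm).** Let `d` be a metric on `ℤ^m`
(nonnegative, symmetric, satisfying the triangle inequality, and vanishing exactly
on the diagonal) that is equivariant with respect to the action of `ℤ^m` on itself
by addition. Then there exists a unique seminorm `N` on `ℝ^m` such that for every
`v ∈ ℤ^m` (viewed inside `ℝ^m` via the standard inclusion),
`N(v) = lim_{n→∞} d(0, n·v)/n`, the limit being over positive integers `n`. -/
theorem equivariant_metric_asymptotic_seminorm
    (m : ℕ) (hm : 1 ≤ m) (d : (Fin m → ℤ) → (Fin m → ℤ) → ℝ)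
    (hd_nonneg : ∀ a b, 0 ≤ d a b)
    (hd_symm : ∀ a b, d a b = d b a)
    (hd_triangle : ∀ a b c, d a c ≤ d a b + d b c)
    (hd_eq_zero : ∀ a b, d a b = 0 ↔ a = b)
    (hd_equivariant : ∀ a b c, d (a + c) (b + c) = d a b) :
    ∃! N : (Fin m → ℝ) → ℝ,
      ((∀ w, 0 ≤ N w)
        ∧ (∀ (l : ℝ) (w : Fin m → ℝ), N (l • w) = |l| * N w)
        ∧ (∀ w w' : Fin m → ℝ, N (w + w') ≤ N w + N w'))
      ∧ ∀ v : Fin m → ℤ,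
          Tendsto (fun n : ℕ => d 0 ((n : ℤ) • v) / (n : ℝ)) atTop
            (nhds (N (fun i => (v i : ℝ)))) :=
  equivariant_metric_asymptotic_seminorm_general m d hd_symm hd_triangle hd_eq_zero hd_equivariant
end
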